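/- arXiv:2108.09923 — 3 statements merged into one kernel-verified Lean document; each statement's English description precedes it below -/
import Mathlib

section
/- Let X₁,…,X_q be normed linear spaces and let X = X₁ ⊕ ⋯ ⊕ X_q be their direct sum equipped with a norm ‖·‖ making it a normed linear space. Then ‖·‖ is absolute if and only if it has the maximum property, i.e., for every family of bounded linear operators T_i : X_i → X_i, the operator norm of the direct-sum operator T = T₁ ⊕ ⋯ ⊕ T_q induced by ‖·‖ equals max_{1 ≤ i ≤ q} ‖T_i‖, where ‖T_i‖ is the operator norm induced by the norm of X_i. -/
/-!
An absolute norm is monotone in the norms of the components: shrinking the `j`-th component by a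
factor `c ∈ [-1, 1]` writes the vector as a convex combination of itself and its reflection in the
`j`-th component, which has the same norm. Monotonicity bounds `‖T x‖` by `(maxᵢ ‖Tᵢ‖) ‖x‖`, and
vectors supported on a single component `j` show that `‖Tⱼ‖` is approached. Conversely, if
`‖xᵢ‖ = ‖yᵢ‖` for all `i`, Hahn–Banach gives operators `Tᵢ` of norm at most `1` with `Tᵢ xᵢ = yᵢ`,
so the maximum property yields `‖y‖ ≤ ‖x‖`, and equality by symmetry.
-/

open Function

theorem ContinuousLinearMap.exists_norm_le_one_apply_eq {E F : Type*} [SeminormedAddCommGroup E]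
    [NormedSpace ℝ E] [NormedAddCommGroup F] [NormedSpace ℝ F] {u : E} {v : F}
    (h : ‖u‖ = ‖v‖) : ∃ T : E →L[ℝ] F, ‖T‖ ≤ 1 ∧ T u = v := by
  obtain ⟨g, hg, hgu⟩ := exists_dual_vector'' ℝ u
  refine ⟨g.smulRight (‖u‖⁻¹ • v), ?_, ?_⟩
  · rw [norm_smulRight_apply, norm_smul, norm_inv, norm_norm, h]
    exact mul_le_one₀ hg (by positivity) inv_mul_le_one
  · obtain hv | hv := eq_or_ne ‖v‖ 0
    · simp [norm_eq_zero.1 hv]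
    · simp [hgu, smul_smul, h, hv]

namespace Seminorm

theorem pos_of_ne_zero {E : Type*} [AddCommGroup E] [Module ℝ E] {p : Seminorm ℝ E}
    (hdef : ∀ x, p x = 0 → x = 0) {x : E} (hx : x ≠ 0) : 0 < p x :=
  (apply_nonneg p x).lt_of_ne' (mt (hdef x) hx)

variable {ι : Type*} {X : ι → Type*} [∀ i, NormedAddCommGroup (X i)] [∀ i, NormedSpace ℝ (X i)]

def IsAbsolute (p : Seminorm ℝ (∀ i, X i)) : Prop :=
  ∀ x y : ∀ i, X i, (∀ i, ‖x i‖ = ‖y i‖) → p x = p y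

variable {p : Seminorm ℝ (∀ i, X i)}

theorem isAbsolute_of_forall_apply_le
    (h : ∀ T : ∀ i, X i →L[ℝ] X i, (∀ i, ‖T i‖ ≤ 1) → ∀ x, p (fun i => T i (x i)) ≤ p x) :
    p.IsAbsolute := by
  have key : ∀ x y : ∀ i, X i, (∀ i, ‖x i‖ = ‖y i‖) → p y ≤ p x := fun x y hxy => by
    choose T hT hTx using fun i => ContinuousLinearMap.exists_norm_le_one_apply_eq (hxy i)
    simpa only [hTx] using h T hT x
  exact fun x y hxy => le_antisymm (key y x fun i => (hxy i).symm) (key x y hxy)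

namespace IsAbsolute

theorem update_smul_le [DecidableEq ι] (hp : p.IsAbsolute) (y : ∀ i, X i) (j : ι) {c : ℝ}
    (hc : |c| ≤ 1) : p (update y j (c • y j)) ≤ p y := by
  have hflip : p (update y j (-y j)) = p y := hp _ _ fun i => by
    rcases eq_or_ne i j with rfl | hi <;> simp [*]
  have hcomb : update y j (c • y j) = ((1 + c) / 2) • y + ((1 - c) / 2) • update y j (-y j) := by
    ext i
    rcases eq_or_ne i j with rfl | hi
    · simp only [update_self, Pi.add_apply, Pi.smul_apply]
      module
    · simp only [update_of_ne hi, Pi.add_apply, Pi.smul_apply]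
      module
  obtain ⟨hc₁, hc₂⟩ := abs_le.1 hc
  calc p (update y j (c • y j))
      ≤ p (((1 + c) / 2) • y) + p (((1 - c) / 2) • update y j (-y j)) :=
        hcomb ▸ map_add_le_add p _ _
    _ = p y := by
        rw [map_smul_eq_mul, map_smul_eq_mul, hflip, Real.norm_of_nonneg (by linarith),
          Real.norm_of_nonneg (by linarith)]
        ring

theorem smul_le [Fintype ι] (hp : p.IsAbsolute) (y : ∀ i, X i) {t : ι → ℝ}
    (ht : ∀ i, |t i| ≤ 1) : p (fun i => t i • y i) ≤ p y := by
  classical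
  suffices ∀ s : Finset ι, p (s.piecewise (fun i => t i • y i) y) ≤ p y by
    simpa using this Finset.univ
  intro s
  induction s using Finset.induction_on with
  | empty => simp
  | insert j s hj ih =>
    set w := s.piecewise (fun i => t i • y i) y
    have hw : w j = y j := Finset.piecewise_eq_of_notMem _ _ _ hj
    calc p ((insert j s).piecewise (fun i => t i • y i) y) = p (update w j (t j • w j)) := by
          rw [Finset.piecewise_insert, hw]
      _ ≤ p y := (hp.update_smul_le w j (ht j)).trans ih

theorem mono [Fintype ι] (hp : p.IsAbsolute) {x y : ∀ i, X i} (h : ∀ i, ‖x i‖ ≤ ‖y i‖) :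
    p x ≤ p y :=
  -- when `‖y i‖ = 0` the factor `‖x i‖ / ‖y i‖` is the junk value `0`, harmless as `x i = 0`
  calc p x = p (fun i => (‖x i‖ / ‖y i‖) • y i) := hp _ _ fun i => by
        rw [norm_smul, Real.norm_of_nonneg (by positivity), div_mul_cancel_of_imp]
        exact fun h0 => le_antisymm (h0 ▸ h i) (norm_nonneg _)
    _ ≤ p y := hp.smul_le y fun i => by
        rw [abs_of_nonneg (by positivity)]
        exact div_le_one_of_le₀ (h i) (norm_nonneg _)

theorem single_mul_norm [DecidableEq ι] (hp : p.IsAbsolute) (j : ι) (u v : X j) :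
    p (Pi.single j v) * ‖u‖ = ‖v‖ * p (Pi.single j u) := by
  have := hp (‖u‖ • Pi.single j v) (‖v‖ • Pi.single j u) fun i => by
    rcases eq_or_ne i j with rfl | hi
    · simp [norm_smul, mul_comm]
    · simp [hi]
  simpa [map_smul_eq_mul, mul_comm] using this

theorem apply_le [Fintype ι] (hp : p.IsAbsolute) (T : ∀ i, X i →L[ℝ] X i) {M : ℝ} (hM₀ : 0 ≤ M)
    (hM : ∀ i, ‖T i‖ ≤ M) (x : ∀ i, X i) : p (fun i => T i (x i)) ≤ M * p x :=
  calc p (fun i => T i (x i)) ≤ p (M • x) := hp.mono fun i => by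
        rw [Pi.smul_apply, norm_smul, Real.norm_of_nonneg hM₀]
        exact (T i).le_of_opNorm_le (hM i) _
    _ = M * p x := by rw [map_smul_eq_mul, Real.norm_of_nonneg hM₀]

theorem isLUB_ratios [Fintype ι] [∀ i, Nontrivial (X i)] (hp : p.IsAbsolute)
    (hdef : ∀ x, p x = 0 → x = 0) (T : ∀ i, X i →L[ℝ] X i) (hne : (Finset.univ : Finset ι).Nonempty) :
    IsLUB {c : ℝ | ∃ x : ∀ i, X i, x ≠ 0 ∧ c = p (fun i => T i (x i)) / p x}
      (Finset.univ.sup' hne fun i => ‖T i‖) := by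
  classical
  have hM : ∀ i, ‖T i‖ ≤ Finset.univ.sup' hne fun i => ‖T i‖ := fun i =>
    Finset.le_sup' (fun i => ‖T i‖) (Finset.mem_univ i)
  refine ⟨?_, fun b hb => Finset.sup'_le _ _ fun j _ => ?_⟩
  · rintro _ ⟨x, hx, rfl⟩
    obtain ⟨i₀, -⟩ := id hne
    exact (div_le_iff₀ (pos_of_ne_zero hdef hx)).2
      (hp.apply_le T ((norm_nonneg _).trans (hM i₀)) hM x)
  · have hratio : ∀ u : X j, u ≠ 0 → ‖T j u‖ / ‖u‖ ≤ b := fun u hu => by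
      have hsingle : Pi.single j u ≠ 0 := Pi.single_ne_zero_iff.2 hu
      have hratio_eq : p (Pi.single j (T j u)) / p (Pi.single j u) = ‖T j u‖ / ‖u‖ :=
        (div_eq_div_iff (pos_of_ne_zero hdef hsingle).ne' (norm_ne_zero_iff.2 hu)).2
          (hp.single_mul_norm j u (T j u))
      have hmem := hb ⟨Pi.single j u, hsingle, rfl⟩
      rwa [← Pi.single_op (fun i => T i) (fun i => map_zero _), hratio_eq] at hmem
    obtain ⟨u₀, hu₀⟩ := exists_ne (0 : X j)
    refine (T j).opNorm_le_bound' ((by positivity : 0 ≤ ‖T j u₀‖ / ‖u₀‖).trans (hratio u₀ hu₀))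
      fun u hu => ?_
    exact (div_le_iff₀ (norm_pos_iff.2 (norm_ne_zero_iff.1 hu))).1
      (hratio u (norm_ne_zero_iff.1 hu))

end IsAbsolute

end Seminorm

/-- **Absolute norms have the maximum property, and conversely.**
Let `X₁,…,X_q` be (nontrivial) normed linear spaces and let `nrm` be a norm on
the direct sum `X = X₁ ⊕ ⋯ ⊕ X_q` (given by its defining properties:
definiteness, absolute homogeneity and the triangle inequality).  Then `nrm` is
absolute (i.e. `nrm x` depends only on the component norms `‖x i‖`) if and only
if it has the maximum property: for every family of bounded operators
`T i : X i →L X i`, the operator norm of the direct-sum operator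
`x ↦ (T₁ x₁, …, T_q x_q)` induced by `nrm` — i.e. the least upper bound of the
set `{ nrm (T x) / nrm x | x ≠ 0 }` — equals `max_i ‖T i‖`. -/
theorem absolute_norm_iff_maximum_property
    {q : ℕ} (hq : 0 < q) (X : Fin q → Type*)
    [∀ i, NormedAddCommGroup (X i)] [∀ i, NormedSpace ℝ (X i)]
    [∀ i, Nontrivial (X i)]
    (nrm : (∀ i, X i) → ℝ)
    (hdef : ∀ x, nrm x = 0 → x = 0)
    (hhom : ∀ (a : ℝ) (x : ∀ i, X i), nrm (a • x) = |a| * nrm x)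
    (htri : ∀ x y : ∀ i, X i, nrm (x + y) ≤ nrm x + nrm y) :
    (∀ x y : ∀ i, X i, (∀ i, ‖x i‖ = ‖y i‖) → nrm x = nrm y)
      ↔
    (∀ T : ∀ i, X i →L[ℝ] X i,
      IsLUB {c : ℝ | ∃ x : ∀ i, X i, x ≠ 0 ∧ c = nrm (fun i => T i (x i)) / nrm x}
        (Finset.univ.sup' ⟨⟨0, hq⟩, Finset.mem_univ _⟩ (fun i => ‖T i‖))) := by
  let p : Seminorm ℝ (∀ i, X i) := Seminorm.of nrm htri fun a x => by rw [hhom, Real.norm_eq_abs]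
  refine ⟨fun hab T => Seminorm.IsAbsolute.isLUB_ratios (p := p) hab hdef T _, fun hmax => ?_⟩
  refine Seminorm.isAbsolute_of_forall_apply_le (p := p) fun T hT x => ?_
  obtain rfl | hx := eq_or_ne x 0
  · simp [← Pi.zero_def]
  have hsup : Finset.univ.sup' ⟨⟨0, hq⟩, Finset.mem_univ _⟩ (fun i => ‖T i‖) ≤ 1 :=
    Finset.sup'_le _ _ fun i _ => hT i
  exact (div_le_one (Seminorm.pos_of_ne_zero (p := p) hdef hx)).1
    (((hmax T).1 ⟨x, hx, rfl⟩).trans hsup)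
end

section
/- Let E be a normed space, L ≥ 1 an integer, and for each layer ℓ = 1,…,L let σ_ℓ : E → E be Lipschitz with constant C_ℓ and σ_ℓ(0) = 0, and let A_ℓ, Ã_ℓ : E → E be bounded linear operators with ‖A_ℓ‖ ≤ B_ℓ, ‖Ã_ℓ‖ ≤ B_ℓ, and ‖A_ℓ − Ã_ℓ‖ ≤ Δ_ℓ. Given an input x ∈ E, define recursively x_0 = x̃_0 = x, x_ℓ = σ_ℓ(A_ℓ x_{ℓ−1}) and x̃_ℓ = σ_ℓ(Ã_ℓ x̃_{ℓ−1}). Then ‖x_L − x̃_L‖ ≤ (∑_{ℓ=1}^L Δ_ℓ (∏_{r=ℓ}^L C_r)(∏_{r=ℓ+1}^L B_r)(∏_{r=1}^{ℓ−1} C_r B_r)) ‖x‖. -/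
/-!
Comparing the two networks layer by layer, the error after layer `ℓ` is at most
`C_ℓ (B_ℓ · (error after layer ℓ-1) + Δ_ℓ · ‖x̃_{ℓ-1}‖)`: the first term propagates the old
error through the unperturbed filter, the second is the new filter perturbation applied to the
perturbed signal. Since `σ_ℓ 0 = 0`, `‖x̃_{ℓ-1}‖ ≤ (∏_{r<ℓ} C_r B_r) ‖x‖`, and unrolling the
recursion gives the stated sum.
-/

open Finset

section Layer

variable {𝕜 E F G : Type*} [NontriviallyNormedField 𝕜]
  [SeminormedAddCommGroup E] [NormedSpace 𝕜 E] [SeminormedAddCommGroup F] [NormedSpace 𝕜 F]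
  [SeminormedAddCommGroup G] {σ : F → G} {A A' : E →L[𝕜] F} {C B Δ : ℝ}

theorem norm_layer_le (hC : 0 ≤ C) (hσ : ∀ a b, ‖σ a - σ b‖ ≤ C * ‖a - b‖) (hσ0 : σ 0 = 0)
    (hA : ‖A‖ ≤ B) (v : E) : ‖σ (A v)‖ ≤ C * B * ‖v‖ :=
  calc ‖σ (A v)‖ ≤ C * ‖A v‖ := by simpa [hσ0] using hσ (A v) 0
    _ ≤ C * (B * ‖v‖) := by gcongr; exact A.le_of_opNorm_le hA v
    _ = C * B * ‖v‖ := by ring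

theorem norm_layer_sub_layer_le (hC : 0 ≤ C) (hσ : ∀ a b, ‖σ a - σ b‖ ≤ C * ‖a - b‖)
    (hA : ‖A‖ ≤ B) (hΔ : ‖A - A'‖ ≤ Δ) (u v : E) :
    ‖σ (A u) - σ (A' v)‖ ≤ C * (B * ‖u - v‖ + Δ * ‖v‖) := by
  have hsplit : A u - A' v = A (u - v) + (A - A') v := by
    simp only [map_sub, sub_apply]; abel
  calc ‖σ (A u) - σ (A' v)‖ ≤ C * ‖A u - A' v‖ := hσ _ _
    _ ≤ C * (B * ‖u - v‖ + Δ * ‖v‖) := by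
      rw [hsplit]
      gcongr
      exact norm_add_le_of_le (A.le_of_opNorm_le hA _) ((A - A').le_of_opNorm_le hΔ _)

end Layer

def stabilityBound {R : Type*} [CommSemiring R] (C B Δ : ℕ → R) (n : ℕ) : R :=
  ∑ ℓ ∈ Icc 1 n, Δ ℓ * (∏ r ∈ Icc ℓ n, C r) * (∏ r ∈ Icc (ℓ + 1) n, B r)
    * (∏ r ∈ Icc 1 (ℓ - 1), C r * B r)

theorem stabilityBound_succ {R : Type*} [CommSemiring R] (C B Δ : ℕ → R) (n : ℕ) :
    stabilityBound C B Δ (n + 1) = C (n + 1) * B (n + 1) * stabilityBound C B Δ n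
      + C (n + 1) * Δ (n + 1) * ∏ r ∈ Icc 1 n, C r * B r := by
  rw [stabilityBound, stabilityBound, sum_Icc_succ_top (by omega), mul_sum]
  congr 1
  · refine sum_congr rfl fun ℓ hℓ => ?_
    rw [prod_Icc_succ_top (by grind), prod_Icc_succ_top (by grind)]
    ring
  · rw [Icc_self, Icc_eq_empty (by omega), prod_singleton, prod_empty, Nat.add_sub_cancel]
    ring

section Network

variable {E : Type*} [SeminormedAddCommGroup E] [NormedSpace ℝ E]
  {L : ℕ} {σ : ℕ → E → E} {A A' : ℕ → E →L[ℝ] E} {C B Δ : ℕ → ℝ} {xs ys : ℕ → E}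

theorem norm_forward_le (hC : ∀ ℓ ∈ Icc 1 L, 0 ≤ C ℓ)
    (hσ : ∀ ℓ ∈ Icc 1 L, ∀ a b : E, ‖σ ℓ a - σ ℓ b‖ ≤ C ℓ * ‖a - b‖)
    (hσ0 : ∀ ℓ ∈ Icc 1 L, σ ℓ 0 = 0) (hA : ∀ ℓ ∈ Icc 1 L, ‖A ℓ‖ ≤ B ℓ)
    (hxs : ∀ ℓ < L, xs (ℓ + 1) = σ (ℓ + 1) (A (ℓ + 1) (xs ℓ))) {n : ℕ} (hn : n ≤ L) :
    ‖xs n‖ ≤ (∏ r ∈ Icc 1 n, C r * B r) * ‖xs 0‖ := by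
  induction n with
  | zero => simp
  | succ n ih =>
    have hmem : n + 1 ∈ Icc 1 L := mem_Icc.2 ⟨by omega, hn⟩
    have hCB : 0 ≤ C (n + 1) * B (n + 1) :=
      mul_nonneg (hC _ hmem) ((norm_nonneg _).trans (hA _ hmem))
    calc ‖xs (n + 1)‖ ≤ C (n + 1) * B (n + 1) * ‖xs n‖ := by
          rw [hxs n hn]
          exact norm_layer_le (hC _ hmem) (hσ _ hmem) (hσ0 _ hmem) (hA _ hmem) _
      _ ≤ C (n + 1) * B (n + 1) * ((∏ r ∈ Icc 1 n, C r * B r) * ‖xs 0‖) := by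
          gcongr; exact ih (by omega)
      _ = (∏ r ∈ Icc 1 (n + 1), C r * B r) * ‖xs 0‖ := by
          rw [prod_Icc_succ_top (by omega)]; ring

theorem norm_sub_forward_le_stabilityBound (hC : ∀ ℓ ∈ Icc 1 L, 0 ≤ C ℓ)
    (hσ : ∀ ℓ ∈ Icc 1 L, ∀ a b : E, ‖σ ℓ a - σ ℓ b‖ ≤ C ℓ * ‖a - b‖)
    (hσ0 : ∀ ℓ ∈ Icc 1 L, σ ℓ 0 = 0) (hA : ∀ ℓ ∈ Icc 1 L, ‖A ℓ‖ ≤ B ℓ)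
    (hA' : ∀ ℓ ∈ Icc 1 L, ‖A' ℓ‖ ≤ B ℓ) (hΔ : ∀ ℓ ∈ Icc 1 L, ‖A ℓ - A' ℓ‖ ≤ Δ ℓ)
    (h0 : xs 0 = ys 0)
    (hxs : ∀ ℓ < L, xs (ℓ + 1) = σ (ℓ + 1) (A (ℓ + 1) (xs ℓ)))
    (hys : ∀ ℓ < L, ys (ℓ + 1) = σ (ℓ + 1) (A' (ℓ + 1) (ys ℓ))) {n : ℕ} (hn : n ≤ L) :
    ‖xs n - ys n‖ ≤ stabilityBound C B Δ n * ‖ys 0‖ := by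
  induction n with
  | zero => simp [h0, stabilityBound]
  | succ n ih =>
    have hmem : n + 1 ∈ Icc 1 L := mem_Icc.2 ⟨by omega, hn⟩
    have hCB : 0 ≤ C (n + 1) * B (n + 1) :=
      mul_nonneg (hC _ hmem) ((norm_nonneg _).trans (hA _ hmem))
    have hCΔ : 0 ≤ C (n + 1) * Δ (n + 1) :=
      mul_nonneg (hC _ hmem) ((norm_nonneg _).trans (hΔ _ hmem))
    calc ‖xs (n + 1) - ys (n + 1)‖
        ≤ C (n + 1) * (B (n + 1) * ‖xs n - ys n‖ + Δ (n + 1) * ‖ys n‖) := by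
          rw [hxs n hn, hys n hn]
          exact norm_layer_sub_layer_le (hC _ hmem) (hσ _ hmem) (hA _ hmem) (hΔ _ hmem) _ _
      _ = C (n + 1) * B (n + 1) * ‖xs n - ys n‖ + C (n + 1) * Δ (n + 1) * ‖ys n‖ := by ring
      _ ≤ C (n + 1) * B (n + 1) * (stabilityBound C B Δ n * ‖ys 0‖)
          + C (n + 1) * Δ (n + 1) * ((∏ r ∈ Icc 1 n, C r * B r) * ‖ys 0‖) := by
          gcongr
          · exact ih (by omega)
          · exact norm_forward_le hC hσ hσ0 hA' hys (by omega)
      _ = stabilityBound C B Δ (n + 1) * ‖ys 0‖ := by rw [stabilityBound_succ]; ring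

end Network

open Finset in
theorem algNN_stability_single_feature_general
    {E : Type*} [NormedAddCommGroup E] [NormedSpace ℝ E]
    (L : ℕ)
    (σ : ℕ → E → E) (A A' : ℕ → E →L[ℝ] E) (C B Δ : ℕ → ℝ)
    (hC : ∀ ℓ ∈ Icc 1 L, 0 ≤ C ℓ)
    (hσ : ∀ ℓ ∈ Icc 1 L, ∀ a b : E, ‖σ ℓ a - σ ℓ b‖ ≤ C ℓ * ‖a - b‖)
    (hσ0 : ∀ ℓ ∈ Icc 1 L, σ ℓ 0 = 0)
    (hA : ∀ ℓ ∈ Icc 1 L, ‖A ℓ‖ ≤ B ℓ)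
    (hA' : ∀ ℓ ∈ Icc 1 L, ‖A' ℓ‖ ≤ B ℓ)
    (hΔ : ∀ ℓ ∈ Icc 1 L, ‖A ℓ - A' ℓ‖ ≤ Δ ℓ)
    (x : E) (xs ys : ℕ → E)
    (hx0 : xs 0 = x) (hy0 : ys 0 = x)
    (hxs : ∀ ℓ < L, xs (ℓ + 1) = σ (ℓ + 1) (A (ℓ + 1) (xs ℓ)))
    (hys : ∀ ℓ < L, ys (ℓ + 1) = σ (ℓ + 1) (A' (ℓ + 1) (ys ℓ))) :
    ‖xs L - ys L‖ ≤
      (∑ ℓ ∈ Icc 1 L, Δ ℓ * (∏ r ∈ Icc ℓ L, C r) * (∏ r ∈ Icc (ℓ + 1) L, B r)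
        * (∏ r ∈ Icc 1 (ℓ - 1), C r * B r)) * ‖x‖ := by
  rw [← hy0]
  exact norm_sub_forward_le_stabilityBound hC hσ hσ0 hA hA' hΔ (hx0.trans hy0.symm) hxs hys le_rfl

open Finset in
/-- **Multi-layer stability of algebraic neural networks (single feature).**
Each layer applies a bounded linear filter (`A ℓ`, perturbed `A' ℓ`, with
`‖A ℓ‖, ‖A' ℓ‖ ≤ B ℓ` and `‖A ℓ - A' ℓ‖ ≤ Δ ℓ`) followed by a `C ℓ`-Lipschitz
nonlinearity `σ ℓ` vanishing at `0`.  Then the outputs after `L` layers satisfy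
`‖x_L − x̃_L‖ ≤ (∑_{ℓ=1}^L Δ_ℓ (∏_{r=ℓ}^L C_r)(∏_{r=ℓ+1}^L B_r)(∏_{r=1}^{ℓ−1} C_r B_r)) ‖x‖`. -/
theorem algNN_stability_single_feature
    {E : Type*} [NormedAddCommGroup E] [NormedSpace ℝ E]
    (L : ℕ) (hL : 1 ≤ L)
    (σ : ℕ → E → E) (A A' : ℕ → E →L[ℝ] E) (C B Δ : ℕ → ℝ)
    (hC : ∀ ℓ ∈ Icc 1 L, 0 ≤ C ℓ)
    (hσ : ∀ ℓ ∈ Icc 1 L, ∀ a b : E, ‖σ ℓ a - σ ℓ b‖ ≤ C ℓ * ‖a - b‖)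
    (hσ0 : ∀ ℓ ∈ Icc 1 L, σ ℓ 0 = 0)
    (hA : ∀ ℓ ∈ Icc 1 L, ‖A ℓ‖ ≤ B ℓ)
    (hA' : ∀ ℓ ∈ Icc 1 L, ‖A' ℓ‖ ≤ B ℓ)
    (hΔ : ∀ ℓ ∈ Icc 1 L, ‖A ℓ - A' ℓ‖ ≤ Δ ℓ)
    (x : E) (xs ys : ℕ → E)
    (hx0 : xs 0 = x) (hy0 : ys 0 = x)
    (hxs : ∀ ℓ < L, xs (ℓ + 1) = σ (ℓ + 1) (A (ℓ + 1) (xs ℓ)))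
    (hys : ∀ ℓ < L, ys (ℓ + 1) = σ (ℓ + 1) (A' (ℓ + 1) (ys ℓ))) :
    ‖xs L - ys L‖ ≤
      (∑ ℓ ∈ Icc 1 L, Δ ℓ * (∏ r ∈ Icc ℓ L, C r) * (∏ r ∈ Icc (ℓ + 1) L, B r)
        * (∏ r ∈ Icc 1 (ℓ - 1), C r * B r)) * ‖x‖ :=
  algNN_stability_single_feature_general L σ A A' C B Δ hC hσ hσ0 hA hA' hΔ x xs ys hx0 hy0 hxs hys
end

section
/- Let E be a normed space, L ≥ 1 an integer, F_0 = 1 and F_1,…,F_L positive integers (feature counts). For each layer ℓ = 1,…,L let σ_ℓ : E → E be Lipschitz with constant C_ℓ and σ_ℓ(0) = 0, and let A_ℓ^{fg}, Ã_ℓ^{fg} : E → E (for 1 ≤ f ≤ F_ℓ, 1 ≤ g ≤ F_{ℓ−1}) be bounded linear operators with ‖A_ℓ^{fg}‖ ≤ B_ℓ, ‖Ã_ℓ^{fg}‖ ≤ B_ℓ, and ‖A_ℓ^{fg} − Ã_ℓ^{fg}‖ ≤ Δ_ℓ for all f, g. Given an input x ∈ E, define x_0^1 = x̃_0^1 = x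 and recursively x_ℓ^f = σ_ℓ(∑_{g=1}^{F_{ℓ−1}} A_ℓ^{fg} x_{ℓ−1}^g) and x̃_ℓ^f = σ_ℓ(∑_{g=1}^{F_{ℓ−1}} Ã_ℓ^{fg} x̃_{ℓ−1}^g). Then each output feature satisfies ‖x_L^f − x̃_L^f‖ ≤ (∑_{ℓ=1}^L Δ_ℓ (∏_{r=ℓ}^L C_r)(∏_{r=ℓ+1}^L B_r)(∏_{r=ℓ}^{L−1} F_r)(∏_{r=1}^{ℓ−1} C_r F_r B_r)) ‖x‖. -/
/-!
Run the two networks side by side and induct on the depth, bounding at each layer both the size of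
the perturbed features and their distance to the unperturbed ones. A layer multiplies the size
bound by `C ℓ F (ℓ-1) B ℓ`, while writing `A u - A' v = (A - A') v + A (u - v)` gives the distance
recursion `d ℓ = C ℓ F (ℓ-1) (Δ ℓ p (ℓ-1) + B ℓ d (ℓ-1))`; the sum in the statement is the
solution of this recursion.
-/

open Finset

namespace AlgNN

section Layer

variable {𝕜 E F G ι : Type*} [NontriviallyNormedField 𝕜]
  [NormedAddCommGroup E] [NormedSpace 𝕜 E] [NormedAddCommGroup F] [NormedSpace 𝕜 F]
  [SeminormedAddCommGroup G] {σ : F → G} {C B Δ p d : ℝ} {s : Finset ι}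
  {A A' : ι → E →L[𝕜] F} {u v : ι → E}

lemma norm_apply_sub_apply_le (T T' : E →L[𝕜] F) (a b : E) :
    ‖T a - T' b‖ ≤ ‖T - T'‖ * ‖b‖ + ‖T‖ * ‖a - b‖ := by
  have hsplit : T a - T' b = (T - T') b + T (a - b) := by
    simp only [sub_apply, map_sub]
    abel
  rw [hsplit]
  exact (norm_add_le _ _).trans (add_le_add ((T - T').le_opNorm b) (T.le_opNorm _))

lemma norm_sum_apply_le (hA : ∀ g ∈ s, ‖A g‖ ≤ B) (hu : ∀ g ∈ s, ‖u g‖ ≤ p) :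
    ‖∑ g ∈ s, A g (u g)‖ ≤ #s * (B * p) := by
  refine (norm_sum_le_of_le s fun g hg => ?_).trans_eq (by rw [sum_const, nsmul_eq_mul])
  exact ((A g).le_opNorm _).trans <|
    mul_le_mul (hA g hg) (hu g hg) (norm_nonneg _) ((norm_nonneg _).trans (hA g hg))

lemma norm_sum_apply_sub_sum_apply_le (hA : ∀ g ∈ s, ‖A g‖ ≤ B)
    (hΔ : ∀ g ∈ s, ‖A g - A' g‖ ≤ Δ) (hv : ∀ g ∈ s, ‖v g‖ ≤ p)
    (huv : ∀ g ∈ s, ‖u g - v g‖ ≤ d) :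
    ‖∑ g ∈ s, A g (u g) - ∑ g ∈ s, A' g (v g)‖ ≤ #s * (Δ * p + B * d) := by
  rw [← sum_sub_distrib]
  refine (norm_sum_le_of_le s fun g hg => ?_).trans_eq (by rw [sum_const, nsmul_eq_mul])
  refine (norm_apply_sub_apply_le _ _ _ _).trans (add_le_add ?_ ?_)
  · exact mul_le_mul (hΔ g hg) (hv g hg) (norm_nonneg _) ((norm_nonneg _).trans (hΔ g hg))
  · exact mul_le_mul (hA g hg) (huv g hg) (norm_nonneg _) ((norm_nonneg _).trans (hA g hg))

lemma norm_layer_le (hσ : ∀ a b, ‖σ a - σ b‖ ≤ C * ‖a - b‖) (hσ0 : σ 0 = 0) (hC : 0 ≤ C)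
    (hA : ∀ g ∈ s, ‖A g‖ ≤ B) (hu : ∀ g ∈ s, ‖u g‖ ≤ p) :
    ‖σ (∑ g ∈ s, A g (u g))‖ ≤ C * (#s * (B * p)) := by
  simpa [hσ0] using (hσ (∑ g ∈ s, A g (u g)) 0).trans
    (mul_le_mul_of_nonneg_left (by simpa using norm_sum_apply_le hA hu) hC)

lemma norm_layer_sub_layer_le (hσ : ∀ a b, ‖σ a - σ b‖ ≤ C * ‖a - b‖) (hC : 0 ≤ C)
    (hA : ∀ g ∈ s, ‖A g‖ ≤ B) (hΔ : ∀ g ∈ s, ‖A g - A' g‖ ≤ Δ)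
    (hv : ∀ g ∈ s, ‖v g‖ ≤ p) (huv : ∀ g ∈ s, ‖u g - v g‖ ≤ d) :
    ‖σ (∑ g ∈ s, A g (u g)) - σ (∑ g ∈ s, A' g (v g))‖ ≤ C * (#s * (Δ * p + B * d)) :=
  (hσ _ _).trans
    (mul_le_mul_of_nonneg_left (norm_sum_apply_sub_sum_apply_le hA hΔ hv huv) hC)

end Layer

section Bounds

variable (C B Δ : ℕ → ℝ) (F : ℕ → ℕ)

def normBound (m : ℕ) : ℝ :=
  ∏ r ∈ Icc 1 m, C r * F (r - 1) * B r

def stabilityBound (m : ℕ) : ℝ :=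
  ∑ ℓ ∈ Icc 1 m, Δ ℓ * (∏ r ∈ Icc ℓ m, C r) * (∏ r ∈ Icc (ℓ + 1) m, B r)
    * (∏ r ∈ Icc ℓ (m - 1), (F r : ℝ)) * (∏ r ∈ Icc 1 (ℓ - 1), C r * (F r : ℝ) * B r)

@[simp]
lemma normBound_zero : normBound C B F 0 = 1 := by
  simp [normBound]

@[simp]
lemma stabilityBound_zero : stabilityBound C B Δ F 0 = 0 := by
  simp [stabilityBound]

lemma normBound_succ (n : ℕ) :
    normBound C B F (n + 1) = C (n + 1) * F n * B (n + 1) * normBound C B F n := by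
  rw [normBound, prod_Icc_succ_top (by omega), Nat.add_sub_cancel, mul_comm, normBound]

lemma mul_normBound (hF0 : F 0 = 1) (n : ℕ) :
    F n * normBound C B F n = ∏ r ∈ Icc 1 n, C r * (F r : ℝ) * B r := by
  induction n with
  | zero => simp [hF0]
  | succ n ih =>
    rw [normBound_succ, prod_Icc_succ_top (by omega), ← ih]
    ring

lemma stabilityBound_succ (hF0 : F 0 = 1) (n : ℕ) :
    stabilityBound C B Δ F (n + 1) = C (n + 1) * F n
      * (Δ (n + 1) * normBound C B F n + B (n + 1) * stabilityBound C B Δ F n) := by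
  have hlower : ∀ ℓ ∈ Icc 1 n,
      Δ ℓ * (∏ r ∈ Icc ℓ (n + 1), C r) * (∏ r ∈ Icc (ℓ + 1) (n + 1), B r)
          * (∏ r ∈ Icc ℓ n, (F r : ℝ)) * (∏ r ∈ Icc 1 (ℓ - 1), C r * (F r : ℝ) * B r)
        = C (n + 1) * F n * B (n + 1) * (Δ ℓ * (∏ r ∈ Icc ℓ n, C r)
          * (∏ r ∈ Icc (ℓ + 1) n, B r) * (∏ r ∈ Icc ℓ (n - 1), (F r : ℝ))
          * (∏ r ∈ Icc 1 (ℓ - 1), C r * (F r : ℝ) * B r)) := by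
    intro ℓ hℓ
    obtain ⟨hℓ1, hℓn⟩ := mem_Icc.mp hℓ
    obtain ⟨m, rfl⟩ : ∃ m, n = m + 1 := ⟨n - 1, by omega⟩
    rw [prod_Icc_succ_top (by omega) C, prod_Icc_succ_top (by omega) B, Nat.add_sub_cancel,
      prod_Icc_succ_top (by omega) (fun r => (F r : ℝ))]
    ring
  rw [stabilityBound, sum_Icc_succ_top (by omega)]
  simp only [Nat.add_sub_cancel]
  rw [sum_congr rfl hlower, ← mul_sum, Icc_self, prod_singleton,
    Icc_eq_empty (show ¬n + 1 + 1 ≤ n + 1 by omega), Icc_eq_empty (show ¬n + 1 ≤ n by omega),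
    prod_empty, prod_empty, ← mul_normBound C B F hF0, stabilityBound]
  ring

end Bounds

end AlgNN

open Finset AlgNN in
theorem algNN_stability_per_feature_general
    {E : Type*} [NormedAddCommGroup E] [NormedSpace ℝ E]
    (L : ℕ)
    (F : ℕ → ℕ) (hF0 : F 0 = 1)
    (σ : ℕ → E → E) (A A' : ℕ → ℕ → ℕ → E →L[ℝ] E) (C B Δ : ℕ → ℝ)
    (hC : ∀ ℓ ∈ Icc 1 L, 0 ≤ C ℓ)
    (hσ : ∀ ℓ ∈ Icc 1 L, ∀ a b : E, ‖σ ℓ a - σ ℓ b‖ ≤ C ℓ * ‖a - b‖)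
    (hσ0 : ∀ ℓ ∈ Icc 1 L, σ ℓ 0 = 0)
    (hA : ∀ ℓ ∈ Icc 1 L, ∀ f ∈ Icc 1 (F ℓ), ∀ g ∈ Icc 1 (F (ℓ - 1)),
      ‖A ℓ f g‖ ≤ B ℓ)
    (hA' : ∀ ℓ ∈ Icc 1 L, ∀ f ∈ Icc 1 (F ℓ), ∀ g ∈ Icc 1 (F (ℓ - 1)),
      ‖A' ℓ f g‖ ≤ B ℓ)
    (hΔ : ∀ ℓ ∈ Icc 1 L, ∀ f ∈ Icc 1 (F ℓ), ∀ g ∈ Icc 1 (F (ℓ - 1)),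
      ‖A ℓ f g - A' ℓ f g‖ ≤ Δ ℓ)
    (x : E) (xs ys : ℕ → ℕ → E)
    (hx0 : xs 0 1 = x) (hy0 : ys 0 1 = x)
    (hxs : ∀ ℓ < L, ∀ f ∈ Icc 1 (F (ℓ + 1)),
      xs (ℓ + 1) f = σ (ℓ + 1) (∑ g ∈ Icc 1 (F ℓ), A (ℓ + 1) f g (xs ℓ g)))
    (hys : ∀ ℓ < L, ∀ f ∈ Icc 1 (F (ℓ + 1)),
      ys (ℓ + 1) f = σ (ℓ + 1) (∑ g ∈ Icc 1 (F ℓ), A' (ℓ + 1) f g (ys ℓ g))) :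
    ∀ f ∈ Icc 1 (F L),
      ‖xs L f - ys L f‖ ≤
        (∑ ℓ ∈ Icc 1 L, Δ ℓ * (∏ r ∈ Icc ℓ L, C r) * (∏ r ∈ Icc (ℓ + 1) L, B r)
          * (∏ r ∈ Icc ℓ (L - 1), (F r : ℝ))
          * (∏ r ∈ Icc 1 (ℓ - 1), C r * (F r : ℝ) * B r)) * ‖x‖ := by
  suffices key : ∀ m ≤ L, ∀ f ∈ Icc 1 (F m), ‖ys m f‖ ≤ normBound C B F m * ‖x‖ ∧
      ‖xs m f - ys m f‖ ≤ stabilityBound C B Δ F m * ‖x‖ from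
    fun f hf => (key L le_rfl f hf).2
  intro m
  induction m with
  | zero =>
    intro _ f hf
    obtain rfl : f = 1 := by simp only [hF0, Icc_self, mem_singleton] at hf; exact hf
    simp [hx0, hy0]
  | succ n ih =>
    intro hn f hf
    have hℓ : n + 1 ∈ Icc 1 L := mem_Icc.mpr ⟨by omega, hn⟩
    have hcard : (#(Icc 1 (F (n + 1 - 1))) : ℝ) = F n := by simp
    rw [hxs n hn f hf, hys n hn f hf, normBound_succ, stabilityBound_succ C B Δ F hF0]
    constructor
    · refine (norm_layer_le (hσ _ hℓ) (hσ0 _ hℓ) (hC _ hℓ) (hA' _ hℓ f hf)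
        fun g hg => (ih (by omega) g hg).1).trans_eq ?_
      rw [hcard]; ring
    · refine (norm_layer_sub_layer_le (hσ _ hℓ) (hC _ hℓ) (hA _ hℓ f hf) (hΔ _ hℓ f hf)
        (fun g hg => (ih (by omega) g hg).1) fun g hg => (ih (by omega) g hg).2).trans_eq ?_
      rw [hcard]; ring

open Finset in
/-- **Per-feature stability of deep algebraic neural networks with multiple
features.**  Layer `ℓ` maps the `F (ℓ-1)` input features to `F ℓ` output
features; each output feature is the `C ℓ`-Lipschitz nonlinearity `σ ℓ`
(vanishing at `0`) applied to a sum over input features of filtered signals,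
with filters `A ℓ f g` (perturbed `A' ℓ f g`) satisfying `‖A ℓ f g‖ ≤ B ℓ`,
`‖A' ℓ f g‖ ≤ B ℓ` and `‖A ℓ f g - A' ℓ f g‖ ≤ Δ ℓ`.  Then every output
feature `f` of layer `L` satisfies the stated stability bound. -/
theorem algNN_stability_per_feature
    {E : Type*} [NormedAddCommGroup E] [NormedSpace ℝ E]
    (L : ℕ) (hL : 1 ≤ L)
    (F : ℕ → ℕ) (hF0 : F 0 = 1) (hFpos : ∀ ℓ ∈ Icc 1 L, 0 < F ℓ)
    (σ : ℕ → E → E) (A A' : ℕ → ℕ → ℕ → E →L[ℝ] E) (C B Δ : ℕ → ℝ)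
    (hC : ∀ ℓ ∈ Icc 1 L, 0 ≤ C ℓ)
    (hσ : ∀ ℓ ∈ Icc 1 L, ∀ a b : E, ‖σ ℓ a - σ ℓ b‖ ≤ C ℓ * ‖a - b‖)
    (hσ0 : ∀ ℓ ∈ Icc 1 L, σ ℓ 0 = 0)
    (hA : ∀ ℓ ∈ Icc 1 L, ∀ f ∈ Icc 1 (F ℓ), ∀ g ∈ Icc 1 (F (ℓ - 1)),
      ‖A ℓ f g‖ ≤ B ℓ)
    (hA' : ∀ ℓ ∈ Icc 1 L, ∀ f ∈ Icc 1 (F ℓ), ∀ g ∈ Icc 1 (F (ℓ - 1)),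
      ‖A' ℓ f g‖ ≤ B ℓ)
    (hΔ : ∀ ℓ ∈ Icc 1 L, ∀ f ∈ Icc 1 (F ℓ), ∀ g ∈ Icc 1 (F (ℓ - 1)),
      ‖A ℓ f g - A' ℓ f g‖ ≤ Δ ℓ)
    (x : E) (xs ys : ℕ → ℕ → E)
    (hx0 : xs 0 1 = x) (hy0 : ys 0 1 = x)
    (hxs : ∀ ℓ < L, ∀ f ∈ Icc 1 (F (ℓ + 1)),
      xs (ℓ + 1) f = σ (ℓ + 1) (∑ g ∈ Icc 1 (F ℓ), A (ℓ + 1) f g (xs ℓ g)))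
    (hys : ∀ ℓ < L, ∀ f ∈ Icc 1 (F (ℓ + 1)),
      ys (ℓ + 1) f = σ (ℓ + 1) (∑ g ∈ Icc 1 (F ℓ), A' (ℓ + 1) f g (ys ℓ g))) :
    ∀ f ∈ Icc 1 (F L),
      ‖xs L f - ys L f‖ ≤
        (∑ ℓ ∈ Icc 1 L, Δ ℓ * (∏ r ∈ Icc ℓ L, C r) * (∏ r ∈ Icc (ℓ + 1) L, B r)
          * (∏ r ∈ Icc ℓ (L - 1), (F r : ℝ))
          * (∏ r ∈ Icc 1 (ℓ - 1), C r * (F r : ℝ) * B r)) * ‖x‖ :=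
  algNN_stability_per_feature_general L F hF0 σ A A' C B Δ hC hσ hσ0 hA hA' hΔ x xs ys hx0 hy0 hxs
    hys
end
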